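/- Let m be a positive integer and let 1 ≤ i ≤ m and 1 ≤ j ≤ m. Then ∑_{k=i}^{m} ∑_{l=j}^{m} s(k,i) · s(l,j) · ∑_{p,q ⊢ m, |[p]|=k, |[q]|=l} N(p,q) / ([p]! · [q]!) equals 0 if i ≠ j, and equals s(m,i)/m! if i = j, where s(·,·) denotes the signed Stirling numbers of the first kind and the inner sum ranges over all pairs of integer partitions p, q of m with exactly k and l non-zero parts, respectively. -/

import Mathlib

open Finset

/-- Falling factorial of a real number: `x (x-1) ⋯ (x-n+1)`. -/
def fallFac (x : ℝ) (n : ℕ) : ℝ := ∏ i ∈ Finset.range n, (x - i)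

/-- `[p]!`: the product of the factorials of the multiplicities of the parts of `p`. -/
def multFact {m : ℕ} (p : Nat.Partition m) : ℕ :=
  ∏ i ∈ p.parts.toFinset, Nat.factorial (p.parts.count i)

/-- The parts of a partition, as a list, sorted in decreasing order. -/
def partsList {m : ℕ} (p : Nat.Partition m) : List ℕ := p.parts.sort (· ≥ ·)

/-- `N(p,q)`: the number of `|[p]| × |[q]|` binary matrices whose row sums are given
by `p` and whose column sums are given by `q`. -/
noncomputable def Nmat {m : ℕ} (p q : Nat.Partition m) : ℕ :=
  Nat.card {M : Matrix (Fin (Multiset.card p.parts)) (Fin (Multiset.card q.parts)) Bool //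
    (∀ i, (∑ j, if M i j then 1 else 0) = (partsList p).getD i 0) ∧
    (∀ j, (∑ i, if M i j then 1 else 0) = (partsList q).getD j 0)}

/-- The signed Stirling numbers of the first kind, defined via
`x^{\underline{n}} = ∑ i, s(n,i) xⁱ`, i.e. as coefficients of the falling factorial
polynomial. -/
noncomputable def stirlingFirst (n i : ℕ) : ℤ := (descPochhammer ℤ n).coeff i


/-!
The `x × y` binary matrices with `m` ones are `(x * y).choose m` in number. Sort them by their
row-sum vector `r` and column-sum vector `c`, whose nonzero entries form partitions `p` and `q`
of `m`. Deleting the zero rows and columns and reordering the others identifies the matrices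
with margins `(r, c)` with those counted by `N(p, q)`, and there are `x^{\underline{|p|}} / [p]!`
vectors `r` whose nonzero entries form `p`. Hence for all natural `x` and `y`
`(x y)^{\underline m} / m! = ∑_{p,q} N(p,q) x^{\underline{|p|}} y^{\underline{|q|}} / ([p]! [q]!)`,
and expanding the falling factorials in Stirling numbers and comparing the coefficients of
`x^i y^j` gives the theorem.
-/

section nonzeroValues
variable {α : Type*} [Fintype α]

def nonzeroValues (r : α → ℕ) : Multiset ℕ := (univ.val.map r).filter (· ≠ 0)

lemma nonzeroValues_eq_map_filter (r : α → ℕ) :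
    nonzeroValues r = (univ.filter (r · ≠ 0)).val.map r := by
  rw [nonzeroValues, Multiset.filter_map, filter_val]
  rfl

lemma count_map_univ_val (r : α → ℕ) (v : ℕ) :
    (univ.val.map r).count v = Fintype.card {a // r a = v} := by
  rw [Multiset.count_map, Fintype.card_subtype]
  simp [Finset.card, eq_comm]

lemma count_nonzeroValues (r : α → ℕ) {v : ℕ} (hv : v ≠ 0) :
    (nonzeroValues r).count v = Fintype.card {a // r a = v} := by
  rw [nonzeroValues, Multiset.count_filter, if_pos hv, count_map_univ_val]

lemma card_nonzeroValues (r : α → ℕ) :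
    Multiset.card (nonzeroValues r) = Fintype.card {a // r a ≠ 0} := by
  rw [nonzeroValues_eq_map_filter, Multiset.card_map, Fintype.card_subtype]
  rfl

lemma sum_nonzeroValues (r : α → ℕ) : (nonzeroValues r).sum = ∑ a, r a := by
  rw [nonzeroValues_eq_map_filter]
  exact sum_filter_ne_zero _

lemma nonzeroValues_extend_zero {γ : Type*} [Fintype γ] (e : γ ↪ α) (f : γ → ℕ) :
    nonzeroValues (Function.extend e f 0) = nonzeroValues f := by
  have hsupp : univ.filter (Function.extend e f 0 · ≠ 0) = (univ.filter (f · ≠ 0)).map e := by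
    ext a
    by_cases ha : ∃ c, e c = a
    · obtain ⟨c, rfl⟩ := ha
      simp [e.injective.extend_apply]
    · simp [not_exists.1 ha]
  rw [nonzeroValues_eq_map_filter, nonzeroValues_eq_map_filter, hsupp, map_val, Multiset.map_map]
  congr 1
  funext c
  exact e.injective.extend_apply _ _ c

end nonzeroValues

namespace Nat.Partition
variable {m : ℕ} (p : Nat.Partition m)

lemma card_parts_le : Multiset.card p.parts ≤ m := by
  simpa [p.parts_sum] using Multiset.card_nsmul_le_sum (s := p.parts) (a := 1) fun _ => p.parts_pos

def sortedPart (i : Fin (Multiset.card p.parts)) : ℕ := (partsList p).getD i 0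

lemma map_sortedPart_univ : univ.val.map p.sortedPart = p.parts := by
  rw [Fin.univ_val_map]
  conv_rhs => rw [← Multiset.sort_eq p.parts (· ≥ ·)]
  congr 1
  refine List.ext_getElem (by simp) fun n _ h => ?_
  simp [sortedPart, partsList, List.getD_eq_getElem?_getD, List.getElem?_eq_getElem h]

lemma sortedPart_mem (i : Fin (Multiset.card p.parts)) : p.sortedPart i ∈ p.parts := by
  rw [← p.map_sortedPart_univ]
  exact Multiset.mem_map_of_mem _ (mem_univ i)

lemma sortedPart_pos (i : Fin (Multiset.card p.parts)) : 0 < p.sortedPart i :=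
  p.parts_pos (p.sortedPart_mem i)

lemma nonzeroValues_sortedPart : nonzeroValues p.sortedPart = p.parts := by
  rw [nonzeroValues, p.map_sortedPart_univ]
  exact Multiset.filter_eq_self.2 fun v hv => (p.parts_pos hv).ne'

end Nat.Partition

lemma multFact_pos {m : ℕ} (p : Nat.Partition m) : 0 < multFact p :=
  prod_pos fun _ _ => Nat.factorial_pos _

section levelEmbeddings
variable {α β ι : Type*} {f : α → ι} {g : β → ι} {s : Finset ι}

lemma fiberEmbedding_apply_congr (F : ∀ v : s, ({a // f a = v} ↪ {b // g b = v}))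
    {v v' : s} (hv : v = v') {x : {a // f a = v}} {x' : {a // f a = v'}}
    (hx : (x : α) = x') : (F v x : β) = F v' x' := by
  subst hv
  rw [Subtype.ext hx]

variable (f g s) in
def embeddingCompEqEquiv (hs : ∀ a, f a ∈ s) :
    {e : α ↪ β // g ∘ e = f} ≃ ∀ v : s, ({a // f a = v} ↪ {b // g b = v}) where
  toFun e v := ⟨fun a => ⟨e.1 a, (congrFun e.2 a).trans a.2⟩,
    fun _ _ h => Subtype.ext (e.1.injective (congrArg Subtype.val h))⟩
  invFun F := ⟨⟨fun a => F ⟨f a, hs a⟩ ⟨a, rfl⟩, fun a a' h => by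
      have hfa : f a = f a' := ((F ⟨f a, hs a⟩ ⟨a, rfl⟩).2.symm.trans (congrArg g h)).trans
        (F ⟨f a', hs a'⟩ ⟨a', rfl⟩).2
      dsimp only at h
      rw [← fiberEmbedding_apply_congr F (v := ⟨f a, hs a⟩) (v' := ⟨f a', hs a'⟩) (Subtype.ext hfa)
        (x := ⟨a', hfa.symm⟩) rfl] at h
      exact congrArg Subtype.val ((F _).injective (Subtype.ext h))⟩,
    funext fun a => (F ⟨f a, hs a⟩ ⟨a, rfl⟩).2⟩
  left_inv _ := rfl
  right_inv F := funext fun v => Function.Embedding.ext fun x =>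
    Subtype.ext (fiberEmbedding_apply_congr F (v := ⟨f x, hs x⟩) (Subtype.ext x.2) rfl)

lemma card_embedding_comp_eq [Fintype α] [Fintype β] [DecidableEq ι] (hs : ∀ a, f a ∈ s) :
    Nat.card {e : α ↪ β // g ∘ e = f} =
      ∏ v ∈ s, (Fintype.card {b // g b = v}).descFactorial (Fintype.card {a // f a = v}) := by
  rw [Nat.card_congr (embeddingCompEqEquiv f g s hs), Nat.card_pi, ← prod_coe_sort s]
  exact prod_congr rfl fun v _ => by rw [Nat.card_eq_fintype_card, Fintype.card_embedding_eq]

end levelEmbeddings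

section sortedPartEmbeddings
variable {α : Type*} [Fintype α] {m : ℕ} {p : Nat.Partition m} {r : α → ℕ}

lemma card_embedding_comp_eq_sortedPart (hr : nonzeroValues r = p.parts) :
    Nat.card {e : Fin (Multiset.card p.parts) ↪ α // r ∘ e = p.sortedPart} = multFact p := by
  rw [card_embedding_comp_eq fun i => Multiset.mem_toFinset.2 (p.sortedPart_mem i)]
  refine prod_congr rfl fun v hv => ?_
  have hv0 : v ≠ 0 := (p.parts_pos (Multiset.mem_toFinset.1 hv)).ne'
  rw [← count_nonzeroValues r hv0, hr, ← count_map_univ_val, p.map_sortedPart_univ,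
    Nat.descFactorial_self]

lemma exists_embedding_comp_eq_sortedPart (hr : nonzeroValues r = p.parts) :
    ∃ e : Fin (Multiset.card p.parts) ↪ α, r ∘ e = p.sortedPart := by
  have hpos := card_embedding_comp_eq_sortedPart hr ▸ multFact_pos p
  obtain ⟨e⟩ := (Nat.card_pos_iff.1 hpos).1
  exact ⟨e.1, e.2⟩

lemma mem_range_of_comp_eq_sortedPart (hr : nonzeroValues r = p.parts)
    {e : Fin (Multiset.card p.parts) ↪ α} (he : r ∘ e = p.sortedPart) {a : α} (ha : r a ≠ 0) :
    a ∈ Set.range e := by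
  have hsub : univ.map e ⊆ univ.filter (r · ≠ 0) := fun b hb => by
    obtain ⟨i, -, rfl⟩ := mem_map.1 hb
    simpa [← congrFun he i] using (p.sortedPart_pos i).ne'
  have hcard : (univ.filter (r · ≠ 0)).card ≤ (univ.map e).card := by
    rw [card_map, card_univ, Fintype.card_fin, ← Fintype.card_subtype, ← card_nonzeroValues, hr]
  obtain ⟨i, -, hi⟩ := mem_map.1 ((eq_of_subset_of_card_le hsub hcard).symm ▸
    mem_filter.2 ⟨mem_univ a, ha⟩)
  exact ⟨i, hi⟩

end sortedPartEmbeddings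

section funWithParts
variable {α : Type*} [Fintype α] {m : ℕ} {p : Nat.Partition m}

variable (α p) in
def FunWithParts : Type _ := {r : α → ℕ // nonzeroValues r = p.parts}

variable (α p) in
noncomputable def extendSortedPart (e : Fin (Multiset.card p.parts) ↪ α) : FunWithParts α p :=
  ⟨Function.extend e p.sortedPart 0, by rw [nonzeroValues_extend_zero, p.nonzeroValues_sortedPart]⟩

lemma extendSortedPart_eq_iff (r : FunWithParts α p) (e : Fin (Multiset.card p.parts) ↪ α) :
    extendSortedPart α p e = r ↔ r.1 ∘ e = p.sortedPart := by
  refine Subtype.ext_iff.trans ?_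
  change Function.extend e p.sortedPart 0 = r.1 ↔ _
  refine ⟨fun h => funext fun i => ?_, fun he => funext fun a => ?_⟩
  · rw [← h, Function.comp_apply, e.injective.extend_apply]
  · by_cases ha : ∃ i, e i = a
    · obtain ⟨i, rfl⟩ := ha
      rw [e.injective.extend_apply, ← congrFun he i, Function.comp_apply]
    · rw [Function.extend_apply' _ _ _ ha, Pi.zero_apply, eq_comm]
      by_contra hra
      exact ha (mem_range_of_comp_eq_sortedPart r.2 he hra)

lemma extendSortedPart_surjective : Function.Surjective (extendSortedPart α p) := fun r => by
  obtain ⟨e, he⟩ := exists_embedding_comp_eq_sortedPart r.2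
  exact ⟨e, (extendSortedPart_eq_iff r e).2 he⟩

instance : Finite (FunWithParts α p) := Finite.of_surjective _ extendSortedPart_surjective

noncomputable instance : Fintype (FunWithParts α p) := Fintype.ofFinite _

/-- Extending `p.sortedPart` by zero along the embeddings `Fin |p| ↪ α` hits every function with
parts `p` exactly `[p]!` times. -/
lemma card_funWithParts_mul_multFact :
    Nat.card (FunWithParts α p) * multFact p =
      (Fintype.card α).descFactorial (Multiset.card p.parts) := by
  have hfiber : ∀ r : FunWithParts α p,
      Nat.card {e // extendSortedPart α p e = r} = multFact p := fun r => by
    rw [Nat.card_congr (Equiv.subtypeEquivRight (extendSortedPart_eq_iff r)),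
      card_embedding_comp_eq_sortedPart r.2]
  rw [← Fintype.card_fin (Multiset.card p.parts), ← Fintype.card_embedding_eq,
    ← Nat.card_eq_fintype_card, ← Nat.card_congr (Equiv.sigmaFiberEquiv (extendSortedPart α p)),
    Nat.card_sigma, sum_congr rfl fun r _ => hfiber r, sum_const, card_univ, smul_eq_mul,
    Nat.card_eq_fintype_card]

end funWithParts

section binMatrix
open scoped Matrix
variable {α α' β : Type*}

def rowSum [Fintype β] (M : Matrix α β Bool) (a : α) : ℕ := ∑ b, if M a b then 1 else 0

lemma rowSum_eq_zero_iff [Fintype β] {M : Matrix α β Bool} {a : α} :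
    rowSum M a = 0 ↔ ∀ b, M a b = false := by
  simp [rowSum]

variable [Fintype α] [Fintype α']

def BinMatrix [Fintype β] (r : α → ℕ) (c : β → ℕ) : Type _ :=
  {M : Matrix α β Bool // (∀ a, rowSum M a = r a) ∧ ∀ b, rowSum Mᵀ b = c b}

instance [Fintype β] (r : α → ℕ) (c : β → ℕ) : Finite (BinMatrix r c) :=
  Subtype.finite

lemma Nmat_eq_card_binMatrix {m : ℕ} (p q : Nat.Partition m) :
    Nmat p q = Nat.card (BinMatrix p.sortedPart q.sortedPart) := rfl

def BinMatrix.transposeEquiv [Fintype β] (r : α → ℕ) (c : β → ℕ) :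
    BinMatrix r c ≃ BinMatrix c r where
  toFun M := ⟨M.1ᵀ, M.2.2, M.2.1⟩
  invFun M := ⟨M.1ᵀ, M.2.2, M.2.1⟩
  left_inv _ := rfl
  right_inv _ := rfl

lemma rowSum_transpose_submatrix (e : α' ↪ α) {M : Matrix α β Bool}
    (hM : ∀ a ∉ Set.range e, ∀ b, M a b = false) (b : β) :
    rowSum (M.submatrix e id)ᵀ b = rowSum Mᵀ b :=
  Fintype.sum_of_injective e e.injective _ _ (fun a ha => by simp [hM a ha]) fun _ => rfl

lemma card_binMatrix_comp_embedding [Fintype β] (e : α' ↪ α) {r : α → ℕ} (c : β → ℕ)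
    (hr : ∀ a, r a ≠ 0 → a ∈ Set.range e) :
    Nat.card (BinMatrix (r ∘ e) c) = Nat.card (BinMatrix r c) := by
  have hzero : ∀ M : BinMatrix r c, ∀ a ∉ Set.range e, ∀ b, M.1 a b = false := fun M a ha =>
    rowSum_eq_zero_iff.1 ((M.2.1 a).trans (not_not.1 (mt (hr a) ha)))
  refine (Nat.card_eq_of_bijective (fun M : BinMatrix r c =>
    (⟨M.1.submatrix e id, fun a' => M.2.1 (e a'), fun b =>
      (rowSum_transpose_submatrix e (hzero M) b).trans (M.2.2 b)⟩ : BinMatrix (r ∘ e) c))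
    ⟨fun M N h => ?_, fun N => ?_⟩).symm
  · refine Subtype.ext (funext fun a => funext fun b => ?_)
    by_cases ha : a ∈ Set.range e
    · obtain ⟨a', rfl⟩ := ha
      exact congrFun (congrFun (congrArg Subtype.val h) a') b
    · rw [hzero M a ha, hzero N a ha]
  · obtain ⟨M, hM, hM0⟩ : ∃ M : Matrix α β Bool,
        M.submatrix e id = N.1 ∧ ∀ a ∉ Set.range e, ∀ b, M a b = false :=
      ⟨Matrix.of (Function.extend e (fun a' b => N.1 a' b) fun _ _ => false),
        funext fun a' => funext fun b =>
          congrFun (e.injective.extend_apply (fun a' b => N.1 a' b) (fun _ _ => false) a') b,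
        fun a ha b =>
          congrFun (Function.extend_apply' (fun a' b => N.1 a' b) (fun _ _ => false) a ha) b⟩
    refine ⟨⟨M, fun a => ?_, fun b => ?_⟩, Subtype.ext hM⟩
    · by_cases ha : a ∈ Set.range e
      · obtain ⟨a', rfl⟩ := ha
        exact (congrArg (rowSum · a') hM).trans (N.2.1 a')
      · rw [rowSum_eq_zero_iff.2 (hM0 a ha), not_not.1 (mt (hr a) ha)]
    · rw [← rowSum_transpose_submatrix e hM0, hM, N.2.2]

lemma card_binMatrix_eq_Nmat [Fintype β] {m : ℕ}
    {p q : Nat.Partition m} {r : α → ℕ} {c : β → ℕ}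
    (hr : nonzeroValues r = p.parts) (hc : nonzeroValues c = q.parts) :
    Nat.card (BinMatrix r c) = Nmat p q := by
  obtain ⟨e, he⟩ := exists_embedding_comp_eq_sortedPart hr
  obtain ⟨f, hf⟩ := exists_embedding_comp_eq_sortedPart hc
  calc Nat.card (BinMatrix r c)
      = Nat.card (BinMatrix (r ∘ e) c) :=
        (card_binMatrix_comp_embedding e c fun _ => mem_range_of_comp_eq_sortedPart hr he).symm
    _ = Nat.card (BinMatrix (c ∘ f) (r ∘ e)) :=
        (Nat.card_congr (BinMatrix.transposeEquiv _ _)).trans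
          (card_binMatrix_comp_embedding f _ fun _ => mem_range_of_comp_eq_sortedPart hc hf).symm
    _ = Nmat p q := by
        rw [Nat.card_congr (BinMatrix.transposeEquiv _ _), he, hf, Nmat_eq_card_binMatrix]

end binMatrix

section decomposition
open scoped Matrix
variable (α β : Type*) [Fintype α] [Fintype β] (m : ℕ)

def MatrixWithOnes : Type _ := {M : Matrix α β Bool // ∑ a, rowSum M a = m}

lemma card_matrixWithOnes :
    Nat.card (MatrixWithOnes α β m) = (Fintype.card α * Fintype.card β).choose m := by
  classical
  let e : MatrixWithOnes α β m ≃ {s : Finset (α × β) // s.card = m} :=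
    { toFun := fun M => ⟨univ.filter fun x => M.1 x.1 x.2, by
        rw [card_filter, Fintype.sum_prod_type]; exact M.2⟩
      invFun := fun ⟨s, hs⟩ => ⟨fun a b => decide ((a, b) ∈ s), by
        subst hs
        simp only [rowSum, decide_eq_true_eq]
        rw [← Fintype.sum_prod_type' (f := fun a b => if (a, b) ∈ s then 1 else 0)]
        simp⟩
      left_inv := fun M => Subtype.ext (funext fun a => funext fun b => by simp)
      right_inv := fun s => Subtype.ext (by ext; simp) }
  rw [Nat.card_congr e, Nat.card_eq_fintype_card, Fintype.card_finset_len, Fintype.card_prod]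

def matrixWithOnesEquiv : MatrixWithOnes α β m ≃
    Σ pq : Nat.Partition m × Nat.Partition m,
      Σ rc : FunWithParts α pq.1 × FunWithParts β pq.2, BinMatrix rc.1.1 rc.2.1 where
  toFun M := ⟨(.ofSums m (univ.val.map (rowSum M.1)) M.2,
      .ofSums m (univ.val.map (rowSum M.1ᵀ)) (sum_comm.trans M.2)),
    (⟨rowSum M.1, rfl⟩, ⟨rowSum M.1ᵀ, rfl⟩), ⟨M.1, fun _ => rfl, fun _ => rfl⟩⟩
  invFun X := ⟨X.2.2.1, by
    rw [sum_congr rfl fun a _ => X.2.2.2.1 a, ← sum_nonzeroValues, X.2.1.1.2, X.1.1.parts_sum]⟩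
  left_inv _ := rfl
  right_inv := by
    rintro ⟨⟨p, q⟩, ⟨⟨r, hr⟩, ⟨c, hc⟩⟩, ⟨M, hMr, hMc⟩⟩
    obtain rfl : rowSum M = r := funext hMr
    obtain rfl : rowSum Mᵀ = c := funext hMc
    have hM : ∑ a, rowSum M a = m := by rw [← sum_nonzeroValues, hr, p.parts_sum]
    obtain rfl : p = .ofSums m _ hM := Nat.Partition.ext hr.symm
    obtain rfl : q = .ofSums m _ (sum_comm.trans hM) := Nat.Partition.ext hc.symm
    rfl

lemma card_matrixWithOnes_eq_sum :
    Nat.card (MatrixWithOnes α β m) = ∑ p : Nat.Partition m, ∑ q : Nat.Partition m,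
      Nat.card (FunWithParts α p) * Nat.card (FunWithParts β q) * Nmat p q := by
  rw [Nat.card_congr (matrixWithOnesEquiv α β m), Nat.card_sigma, Fintype.sum_prod_type]
  refine sum_congr rfl fun p _ => sum_congr rfl fun q _ => ?_
  have hN : ∀ (r : FunWithParts α p) (c : FunWithParts β q),
      Nat.card (BinMatrix r.1 c.1) = Nmat p q := fun r c => card_binMatrix_eq_Nmat r.2 c.2
  simp only [Nat.card_sigma, hN, sum_const, card_univ, smul_eq_mul, Nat.card_eq_fintype_card,
    Fintype.card_prod]

end decomposition

lemma natCast_card_funWithParts (α : Type*) [Fintype α] {m : ℕ} (p : Nat.Partition m) :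
    (Nat.card (FunWithParts α p) : ℝ) =
      ((Fintype.card α).descFactorial (Multiset.card p.parts) : ℝ) / multFact p := by
  rw [eq_div_iff (by exact_mod_cast (multFact_pos p).ne'), ← Nat.cast_mul,
    card_funWithParts_mul_multFact]

lemma choose_mul_eq_sum_partitions (m x y : ℕ) :
    (((x * y).choose m : ℕ) : ℝ) = ∑ p : Nat.Partition m, ∑ q : Nat.Partition m,
      (Nmat p q : ℝ) * ((x.descFactorial (Multiset.card p.parts) : ℝ) / multFact p) *
        ((y.descFactorial (Multiset.card q.parts) : ℝ) / multFact q) := by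
  have h := card_matrixWithOnes_eq_sum (Fin x) (Fin y) m
  rw [card_matrixWithOnes, Fintype.card_fin, Fintype.card_fin] at h
  rw [h]
  push_cast
  refine sum_congr rfl fun p _ => sum_congr rfl fun q _ => ?_
  rw [natCast_card_funWithParts, natCast_card_funWithParts, Fintype.card_fin, Fintype.card_fin]
  ring

section polynomialIdentity
open Polynomial

lemma eq_zero_of_sum_range_mul_natCast_pow_eq_zero {n : ℕ} {c : ℕ → ℝ}
    (h : ∀ x : ℕ, ∑ i ∈ range n, c i * (x : ℝ) ^ i = 0) {i : ℕ} (hi : i < n) : c i = 0 := by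
  set P : ℝ[X] := ∑ k ∈ range n, C (c k) * X ^ k
  have hP : P = 0 := by
    refine eq_zero_of_infinite_isRoot P
      ((Set.infinite_range_of_injective Nat.cast_injective).mono ?_)
    rintro _ ⟨x, rfl⟩
    simp [P, eval_finsetSum, h x]
  simpa [P, finsetSum_coeff, coeff_C_mul_X_pow, hi] using congrArg (coeff · i) hP

lemma eq_of_sum_range_mul_natCast_pow_eq {n : ℕ} {a b : ℕ → ℕ → ℝ}
    (h : ∀ x y : ℕ, ∑ i ∈ range n, ∑ j ∈ range n, a i j * (x : ℝ) ^ i * (y : ℝ) ^ j =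
      ∑ i ∈ range n, ∑ j ∈ range n, b i j * (x : ℝ) ^ i * (y : ℝ) ^ j)
    {i j : ℕ} (hi : i < n) (hj : j < n) : a i j = b i j := by
  have hcol : ∀ x : ℕ, ∑ i ∈ range n, (a i j - b i j) * (x : ℝ) ^ i = 0 := by
    intro x
    refine eq_zero_of_sum_range_mul_natCast_pow_eq_zero (c := fun j =>
      ∑ i ∈ range n, (a i j - b i j) * (x : ℝ) ^ i) (fun y => ?_) hj
    simp only [sum_mul, sub_mul]
    rw [sum_comm, ← sub_eq_zero.mpr (h x y), ← sum_sub_distrib]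
    exact sum_congr rfl fun i _ => by rw [← sum_sub_distrib]
  exact sub_eq_zero.mp (eq_zero_of_sum_range_mul_natCast_pow_eq_zero hcol hi)

end polynomialIdentity

lemma stirlingFirst_eq_zero_of_lt {n i : ℕ} (h : n < i) : stirlingFirst n i = 0 :=
  Polynomial.coeff_eq_zero_of_natDegree_lt (by rwa [descPochhammer_natDegree])

lemma descFactorial_eq_sum_stirlingFirst_mul_pow (x : ℕ) {n N : ℕ} (h : n < N) :
    (x.descFactorial n : ℝ) = ∑ i ∈ range N, (stirlingFirst n i : ℝ) * (x : ℝ) ^ i := by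
  rw [← descPochhammer_eval_eq_descFactorial,
    Polynomial.eval_eq_sum_range' (by rwa [descPochhammer_natDegree]),
    ← descPochhammer_map (Int.castRingHom ℝ)]
  simp only [Polynomial.coeff_map, stirlingFirst, eq_intCast]

lemma choose_eq_sum_stirlingFirst (m x y : ℕ) :
    (((x * y).choose m : ℕ) : ℝ) = ∑ i ∈ range (m + 1), ∑ j ∈ range (m + 1),
      (if i = j then (stirlingFirst m i : ℝ) / m.factorial else 0) * (x : ℝ) ^ i * (y : ℝ) ^ j := by
  simp only [ite_mul, zero_mul, sum_ite_eq, mem_range]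
  rw [sum_congr rfl fun i hi => if_pos (mem_range.mp hi), Nat.cast_choose_eq_descPochhammer_div,
    descPochhammer_eval_eq_descFactorial,
    descFactorial_eq_sum_stirlingFirst_mul_pow _ m.lt_succ_self, sum_div]
  refine sum_congr rfl fun i _ => ?_
  push_cast
  ring

lemma sum_partitions_eq_sum_stirlingFirst (m x y : ℕ) :
    ∑ p : Nat.Partition m, ∑ q : Nat.Partition m, (Nmat p q : ℝ) *
        ((x.descFactorial (Multiset.card p.parts) : ℝ) / multFact p) *
        ((y.descFactorial (Multiset.card q.parts) : ℝ) / multFact q) =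
      ∑ i ∈ range (m + 1), ∑ j ∈ range (m + 1),
        (∑ p : Nat.Partition m, ∑ q : Nat.Partition m,
          (stirlingFirst (Multiset.card p.parts) i : ℝ) *
            (stirlingFirst (Multiset.card q.parts) j : ℝ) *
            ((Nmat p q : ℝ) / (multFact p * multFact q))) * (x : ℝ) ^ i * (y : ℝ) ^ j := by
  have hlt : ∀ p : Nat.Partition m, Multiset.card p.parts < m + 1 :=
    fun p => Nat.lt_succ_of_le p.card_parts_le
  simp only [sum_mul]
  conv_rhs =>
    enter [2, i]; rw [sum_comm]; enter [2, p]; rw [sum_comm]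
  conv_rhs =>
    rw [sum_comm]; enter [2, p]; rw [sum_comm]
  refine sum_congr rfl fun p _ => sum_congr rfl fun q _ => ?_
  rw [descFactorial_eq_sum_stirlingFirst_mul_pow x (hlt p),
    descFactorial_eq_sum_stirlingFirst_mul_pow y (hlt q), mul_assoc, sum_div, sum_div,
    sum_mul_sum, mul_sum]
  refine sum_congr rfl fun i _ => ?_
  rw [mul_sum]
  refine sum_congr rfl fun j _ => ?_
  ring

lemma sum_Icc_ite_eq_self {f : ℕ → ℝ} {c i m : ℕ} (hc : c ≤ m) (hf : c < i → f c = 0) :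
    ∑ k ∈ Icc i m, (if c = k then f k else 0) = f c := by
  rw [sum_ite_eq]
  split_ifs with h
  · rfl
  · exact (hf (by simp only [mem_Icc, not_and_or, not_le] at h; omega)).symm

lemma sum_Icc_stirlingFirst_mul_sum_ite {m : ℕ} (i j : ℕ)
    (V : Nat.Partition m → Nat.Partition m → ℝ) :
    ∑ k ∈ Icc i m, ∑ l ∈ Icc j m, (stirlingFirst k i : ℝ) * (stirlingFirst l j : ℝ) *
        ∑ p : Nat.Partition m, ∑ q : Nat.Partition m,
          (if Multiset.card p.parts = k ∧ Multiset.card q.parts = l then V p q else 0) =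
      ∑ p : Nat.Partition m, ∑ q : Nat.Partition m,
        (stirlingFirst (Multiset.card p.parts) i : ℝ) *
          (stirlingFirst (Multiset.card q.parts) j : ℝ) * V p q := by
  simp only [mul_sum]
  conv_lhs =>
    enter [2, k]; rw [sum_comm]; enter [2, p]; rw [sum_comm]
  conv_lhs =>
    rw [sum_comm]; enter [2, p]; rw [sum_comm]
  refine sum_congr rfl fun p _ => sum_congr rfl fun q _ => ?_
  have hsplit : ∀ k l, (stirlingFirst k i : ℝ) * (stirlingFirst l j : ℝ) *
      (if Multiset.card p.parts = k ∧ Multiset.card q.parts = l then V p q else 0) =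
      if Multiset.card p.parts = k then (if Multiset.card q.parts = l then
        (stirlingFirst k i : ℝ) * (stirlingFirst l j : ℝ) * V p q else 0) else 0 := by
    intro k l
    split_ifs <;> simp_all
  simp only [hsplit, sum_ite_irrel, sum_const_zero]
  rw [sum_Icc_ite_eq_self p.card_parts_le fun h => by simp [stirlingFirst_eq_zero_of_lt h],
    sum_Icc_ite_eq_self q.card_parts_le fun h => by simp [stirlingFirst_eq_zero_of_lt h]]

lemma sum_partitions_stirlingFirst_mul_stirlingFirst {m i j : ℕ} (hi : i ≤ m) (hj : j ≤ m) :
    ∑ p : Nat.Partition m, ∑ q : Nat.Partition m,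
        (stirlingFirst (Multiset.card p.parts) i : ℝ) *
          (stirlingFirst (Multiset.card q.parts) j : ℝ) *
          ((Nmat p q : ℝ) / (multFact p * multFact q)) =
      if i = j then (stirlingFirst m i : ℝ) / m.factorial else 0 :=
  eq_of_sum_range_mul_natCast_pow_eq
    (a := fun i j => ∑ p : Nat.Partition m, ∑ q : Nat.Partition m,
      (stirlingFirst (Multiset.card p.parts) i : ℝ) *
        (stirlingFirst (Multiset.card q.parts) j : ℝ) *
        ((Nmat p q : ℝ) / (multFact p * multFact q)))
    (b := fun i j => if i = j then (stirlingFirst m i : ℝ) / m.factorial else 0)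
    (fun x y => by
      rw [← choose_eq_sum_stirlingFirst, ← sum_partitions_eq_sum_stirlingFirst,
        choose_mul_eq_sum_partitions])
    (Nat.lt_succ_of_le hi) (Nat.lt_succ_of_le hj)

theorem stmt6_general (m i j : ℕ) (him : i ≤ m)
    (hjm : j ≤ m) :
    ∑ k ∈ Finset.Icc i m, ∑ l ∈ Finset.Icc j m,
      (stirlingFirst k i : ℝ) * (stirlingFirst l j : ℝ) *
        ∑ p : Nat.Partition m, ∑ q : Nat.Partition m,
          (if Multiset.card p.parts = k ∧ Multiset.card q.parts = l then
            (Nmat p q : ℝ) / (multFact p * multFact q) else 0)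
    = if i = j then (stirlingFirst m i : ℝ) / Nat.factorial m else 0 := by
  rw [sum_Icc_stirlingFirst_mul_sum_ite, sum_partitions_stirlingFirst_mul_stirlingFirst him hjm]

theorem stmt6 (m i j : ℕ) (hm : 0 < m) (hi1 : 1 ≤ i) (him : i ≤ m)
    (hj1 : 1 ≤ j) (hjm : j ≤ m) :
    ∑ k ∈ Finset.Icc i m, ∑ l ∈ Finset.Icc j m,
      (stirlingFirst k i : ℝ) * (stirlingFirst l j : ℝ) *
        ∑ p : Nat.Partition m, ∑ q : Nat.Partition m,
          (if Multiset.card p.parts = k ∧ Multiset.card q.parts = l then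
            (Nmat p q : ℝ) / (multFact p * multFact q) else 0)
    = if i = j then (stirlingFirst m i : ℝ) / Nat.factorial m else 0 :=
  stmt6_general m i j him hjm
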